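/- arXiv:2106.13985 — 3 statements merged into one kernel-verified Lean document; each statement's English description precedes it below -/
import Mathlib

section
/- If G = (X,Y;E) is an (a,b)-biregular bipartite graph, then G has an X-interval edge coloring using at most a·b colors; in particular χ'_int(G,X) ≤ a·b. -/
/-- `X` is one part of a bipartition of `G`: every edge joins `X` and its complement. -/
def IsBipartition {V : Type*} (G : SimpleGraph V) (X : Set V) : Prop :=
  ∀ v w, G.Adj v w → (v ∈ X ↔ w ∉ X)

/-- A proper edge coloring: distinct edges sharing a vertex get distinct colors. -/
def IsProperEdgeColoring {V : Type*} (G : SimpleGraph V) (c : G.edgeSet → ℕ) : Prop :=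
  ∀ e f : G.edgeSet, e ≠ f → (∃ v, v ∈ (e : Sym2 V) ∧ v ∈ (f : Sym2 V)) → c e ≠ c f

/-- The palette of a vertex: the set of colors on its incident edges. -/
def palette {V : Type*} (G : SimpleGraph V) (c : G.edgeSet → ℕ) (v : V) : Set ℕ :=
  {n | ∃ e : G.edgeSet, v ∈ (e : Sym2 V) ∧ c e = n}

/-- The coloring is interval at `v`: the palette of `v` is a set of consecutive integers. -/
def IntervalAt {V : Type*} (G : SimpleGraph V) (c : G.edgeSet → ℕ) (v : V) : Prop :=
  ∀ a b m : ℕ, a ∈ palette G c v → b ∈ palette G c v → a ≤ m → m ≤ b →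
    m ∈ palette G c v

/-!
Color the edge `xy` (`x ∈ X`) by `κ x y`, where each `x` gets a block `[a w, a w + a)` with
`w < b` and `κ x` maps its `a` neighbors bijectively onto that block; this is interval at `x`.
The rows `κ x` are chosen one vertex of `X` at a time. When `x` is added, each neighbor `y`
already sees at most `b - 1` colors, so at most `a (b - 1) < a b` conflicts are spread over the
`b` blocks and some block carries fewer than `a` of them. Fewer than `a` forbidden
(vertex, color) pairs cannot violate Hall's condition for matching the `a` neighbors of `x` into
the `a` colors of that block, so the row `κ x` exists.
-/

open Finset Function

section Matching

variable {ι β : Type*}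

theorem exists_injective_forall_mem_sdiff_of_sum_card_inter_lt [Fintype ι] [DecidableEq β]
    {C : Finset β} {F : ι → Finset β} (hcard : Fintype.card ι ≤ #C)
    (hF : ∑ i, #(F i ∩ C) < #C) : ∃ g : ι → β, Injective g ∧ ∀ i, g i ∈ C \ F i := by
  refine (all_card_le_biUnion_card_iff_exists_injective _).1 fun s => ?_
  by_contra! hU
  set U := s.biUnion fun i => C \ F i
  have hs : #s ≤ #C := (card_le_univ s).trans hcard
  have hC : #C ≤ #(C \ U) + #U := card_le_card_sdiff_add_card
  have hforced : ∀ i ∈ s, #(C \ U) ≤ #(F i ∩ C) := fun i hi => card_le_card fun c hc => by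
    have : c ∉ C \ F i := fun h => (mem_sdiff.1 hc).2 (mem_biUnion.2 ⟨i, hi, h⟩)
    simp_all
  have hsum : #s * #(C \ U) < #C := calc
    #s * #(C \ U) ≤ ∑ i ∈ s, #(F i ∩ C) := by simpa using card_nsmul_le_sum s _ _ hforced
    _ ≤ ∑ i, #(F i ∩ C) := sum_le_univ_sum_of_nonneg fun _ => Nat.zero_le _
    _ < #C := hF
  -- both factors are positive, so `#s * #(C \ U) ≥ #s + #(C \ U) - 1 ≥ #C`
  nlinarith

theorem sum_card_inter_Ico_mul_le (U : Finset ℕ) {a : ℕ} (ha : 0 < a) (b : ℕ) :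
    ∑ w ∈ range b, #(U ∩ Ico (a * w) (a * w + a)) ≤ #U := calc
  _ = ∑ w ∈ range b, #{c ∈ U | c / a = w} := sum_congr rfl fun w _ => by
      congr 1; ext c
      simp only [mem_inter, mem_Ico, mem_filter, Nat.div_eq_iff ha, mul_comm w]
      exact and_congr_right fun _ => by omega
  _ ≤ #U := (sum_card_fiberwise_eq_card_filter _ _ _).trans_le (card_filter_le _ _)

theorem exists_bijOn_Ico_forall_notMem (N : Finset ι) (U : ι → Finset ℕ) {b : ℕ}
    (hU : ∀ y ∈ N, #(U y) < b) :
    ∃ m, m + #N ≤ #N * b ∧ ∃ r : ι → ℕ, Set.BijOn r N (Set.Ico m (m + #N)) ∧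
      ∀ y ∈ N, r y ∉ U y := by
  classical
  obtain rfl | hN := N.eq_empty_or_nonempty
  · exact ⟨0, by simp, 0, by simp, by simp⟩
  set a := #N
  have ha : 0 < a := hN.card_pos
  obtain ⟨w, hw, hwU⟩ : ∃ w ∈ range b, ∑ y ∈ N, #(U y ∩ Ico (a * w) (a * w + a)) < a := by
    refine exists_lt_of_sum_lt (calc
      ∑ w ∈ range b, ∑ y ∈ N, #(U y ∩ Ico (a * w) (a * w + a))
          = ∑ y ∈ N, ∑ w ∈ range b, #(U y ∩ Ico (a * w) (a * w + a)) := sum_comm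
      _ ≤ ∑ y ∈ N, #(U y) := sum_le_sum fun y _ => sum_card_inter_Ico_mul_le (U y) ha b
      _ < ∑ y ∈ N, b := sum_lt_sum_of_nonempty hN hU
      _ = ∑ w ∈ range b, a := by simp [a, mul_comm])
  obtain ⟨g, hg, hgC⟩ := exists_injective_forall_mem_sdiff_of_sum_card_inter_lt
    (C := Ico (a * w) (a * w + a)) (F := fun y : N => U y) (by simp [a])
    (by rwa [sum_coe_sort N fun y => #(U y ∩ Ico (a * w) (a * w + a)), Nat.card_Ico,
      Nat.add_sub_cancel_left])
  let r : ι → ℕ := fun y => if h : y ∈ N then g ⟨y, h⟩ else 0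
  have hr : ∀ y (h : y ∈ N), r y = g ⟨y, h⟩ := fun y h => dif_pos h
  have hmaps : Set.MapsTo r N (Ico (a * w) (a * w + a)) := fun y h => by
    rw [hr y h]; exact (mem_sdiff.1 (hgC _)).1
  have hinj : Set.InjOn r N := fun y h y' h' hyy' => by
    rw [hr y h, hr y' h'] at hyy'
    exact congrArg Subtype.val (hg hyy')
  refine ⟨a * w, by nlinarith [mem_range.1 hw], r, ⟨?_, hinj, ?_⟩, fun y h => ?_⟩
  · simpa using hmaps
  · simpa using surjOn_of_injOn_of_card_le r hmaps hinj (by simp [a])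
  · rw [hr y h]; exact (mem_sdiff.1 (hgC _)).2

end Matching

section Bipartition

variable {V : Type*} {G : SimpleGraph V} {X : Set V}

theorem IsBipartition.exists_mk_eq (hX : IsBipartition G X) {e : Sym2 V} (he : e ∈ G.edgeSet) :
    ∃ x ∈ X, ∃ y, G.Adj x y ∧ s(x, y) = e := by
  induction e using Sym2.ind with
  | _ u w =>
    by_cases hu : u ∈ X
    · exact ⟨u, hu, w, he, rfl⟩
    · exact ⟨w, not_not.1 (mt (hX u w he).2 hu), u, G.adj_symm he, Sym2.eq_swap⟩

theorem IsBipartition.exists_edgeSet_fun {α : Type*} (hX : IsBipartition G X) (κ : V → V → α) :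
    ∃ c : G.edgeSet → α, ∀ x ∈ X, ∀ y (h : s(x, y) ∈ G.edgeSet), c ⟨s(x, y), h⟩ = κ x y := by
  choose x' hx' y' hadj heq using fun e : G.edgeSet => hX.exists_mk_eq e.2
  refine ⟨fun e => κ (x' e) (y' e), fun x hx y h => ?_⟩
  rcases Sym2.eq_iff.1 (heq ⟨s(x, y), h⟩) with ⟨h₁, h₂⟩ | ⟨h₁, -⟩
  · simp only [h₁, h₂]
  · exact absurd (h₁ ▸ hx' ⟨s(x, y), h⟩) ((hX x y h).1 hx)

variable {κ : V → V → ℕ} {c : G.edgeSet → ℕ}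

theorem IsBipartition.palette_eq_image (hX : IsBipartition G X)
    (hc : ∀ x ∈ X, ∀ y (h : s(x, y) ∈ G.edgeSet), c ⟨s(x, y), h⟩ = κ x y) {x : V} (hx : x ∈ X) :
    palette G c x = κ x '' G.neighborSet x := by
  ext n
  constructor
  · rintro ⟨⟨e, he⟩, hxe, rfl⟩
    obtain ⟨x', hx', y, hadj, rfl⟩ := hX.exists_mk_eq he
    rcases Sym2.mem_iff.1 hxe with rfl | rfl
    · exact ⟨y, hadj, (hc x hx y he).symm⟩
    · exact absurd hx ((hX x' x hadj).1 hx')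
  · rintro ⟨y, hy, rfl⟩
    exact ⟨⟨s(x, y), hy⟩, Sym2.mem_mk_left x y, hc x hx y hy⟩

end Bipartition

namespace SimpleGraph

variable {V : Type*} (G : SimpleGraph V)

/-- `κ x y` is the color of the edge `xy` as seen from its end `x ∈ s`. -/
structure IsPartialIntervalColoring (κ : V → V → ℕ) (a n : ℕ) (s : Set V) : Prop where
  exists_bijOn_Ico : ∀ x ∈ s, ∃ m, m + a ≤ n ∧ Set.BijOn (κ x) (G.neighborSet x) (Set.Ico m (m + a))
  ne_of_adj : ∀ x₁ ∈ s, ∀ x₂ ∈ s, ∀ y, G.Adj x₁ y → G.Adj x₂ y → x₁ ≠ x₂ → κ x₁ y ≠ κ x₂ y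

variable {G}

theorem IsPartialIntervalColoring.isProperEdgeColoring {X : Set V} {κ : V → V → ℕ} {a n : ℕ}
    {c : G.edgeSet → ℕ} (hX : IsBipartition G X) (hκ : G.IsPartialIntervalColoring κ a n X)
    (hc : ∀ x ∈ X, ∀ y (h : s(x, y) ∈ G.edgeSet), c ⟨s(x, y), h⟩ = κ x y) :
    IsProperEdgeColoring G c := by
  rintro ⟨e, he⟩ ⟨f, hf⟩ hne ⟨u, hue, huf⟩
  obtain ⟨x₁, hx₁, y₁, h₁, rfl⟩ := hX.exists_mk_eq he
  obtain ⟨x₂, hx₂, y₂, h₂, rfl⟩ := hX.exists_mk_eq hf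
  rw [hc x₁ hx₁ y₁ he, hc x₂ hx₂ y₂ hf]
  rcases Sym2.mem_iff.1 hue with rfl | rfl <;> rcases Sym2.mem_iff.1 huf with rfl | rfl
  · obtain ⟨m, -, hbij⟩ := hκ.exists_bijOn_Ico u hx₁
    exact fun h => hne (Subtype.ext (congrArg (s(u, ·)) (hbij.injOn h₁ h₂ h)))
  · exact absurd hx₁ ((hX x₂ u h₂).1 hx₂)
  · exact absurd hx₂ ((hX x₁ u h₁).1 hx₁)
  · exact hκ.ne_of_adj x₁ hx₁ x₂ hx₂ u h₁ h₂ fun h => hne (by subst h; rfl)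

theorem IsPartialIntervalColoring.exists_intervalColoring {X : Set V} {κ : V → V → ℕ} {a n : ℕ}
    (hX : IsBipartition G X) (hκ : G.IsPartialIntervalColoring κ a n X) :
    ∃ c : G.edgeSet → ℕ, IsProperEdgeColoring G c ∧ (∀ e, c e < n) ∧
      ∀ x ∈ X, IntervalAt G c x := by
  obtain ⟨c, hc⟩ := hX.exists_edgeSet_fun κ
  refine ⟨c, hκ.isProperEdgeColoring hX hc, fun ⟨e, he⟩ => ?_, fun x hx => ?_⟩
  · obtain ⟨x, hx, y, hxy, rfl⟩ := hX.exists_mk_eq he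
    obtain ⟨m, hm, hbij⟩ := hκ.exists_bijOn_Ico x hx
    have := hbij.mapsTo hxy
    rw [hc x hx y he]
    exact (Set.mem_Ico.1 this).2.trans_le hm
  · obtain ⟨m, -, hbij⟩ := hκ.exists_bijOn_Ico x hx
    intro i j k hi hj hik hkj
    rw [hX.palette_eq_image hc hx, hbij.image_eq, Set.mem_Ico] at *
    omega

variable [G.LocallyFinite]

theorem IsPartialIntervalColoring.exists_insert [DecidableEq V] {κ : V → V → ℕ} {a b : ℕ}
    {s : Set V} {x : V} (hκ : G.IsPartialIntervalColoring κ a (a * b) s) (hxs : x ∉ s)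
    (hx : G.degree x = a) (hy : ∀ y ∈ G.neighborSet x, G.degree y ≤ b) :
    ∃ κ', G.IsPartialIntervalColoring κ' a (a * b) (insert x s) := by
  have hU : ∀ y ∈ G.neighborFinset x, #(((G.neighborFinset y).erase x).image (κ · y)) < b :=
    fun y hxy => by
      have hyx : x ∈ G.neighborFinset y := by simpa [adj_comm] using hxy
      have hdeg_le : G.degree y ≤ b := hy y (by simpa using hxy)
      have hdeg_pos : 0 < G.degree y := card_neighborFinset_eq_degree G y ▸ card_pos.2 ⟨x, hyx⟩
      calc _ ≤ #((G.neighborFinset y).erase x) := card_image_le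
        _ < b := by rw [card_erase_of_mem hyx, card_neighborFinset_eq_degree]; omega
  obtain ⟨m, hm, r, hr, hrU⟩ := exists_bijOn_Ico_forall_notMem _ _ hU
  rw [card_neighborFinset_eq_degree, hx] at hm hr
  rw [coe_neighborFinset] at hr
  have hr_ne : ∀ x' ∈ s, ∀ y, G.Adj x y → G.Adj x' y → r y ≠ κ x' y := fun x' hx' y hxy hx'y h =>
    hrU y (by simpa using hxy) (mem_image.2 ⟨x', by
      simpa [adj_comm, hx'y] using (ne_of_mem_of_not_mem hx' hxs), h.symm⟩)
  refine ⟨update κ x r, fun x' hx' => ?_, fun x₁ h₁ x₂ h₂ y h₁y h₂y hne => ?_⟩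
  · rcases eq_or_ne x' x with rfl | hx'x
    · exact ⟨m, hm, by simpa using hr⟩
    · simpa [hx'x] using hκ.exists_bijOn_Ico x' (hx'.resolve_left hx'x)
  · by_cases h₁x : x₁ = x <;> by_cases h₂x : x₂ = x
    · exact absurd (h₁x.trans h₂x.symm) hne
    · subst h₁x
      simpa [h₂x] using hr_ne x₂ (h₂.resolve_left h₂x) y h₁y h₂y
    · subst h₂x
      simpa [h₁x] using (hr_ne x₁ (h₁.resolve_left h₁x) y h₂y h₁y).symm
    · simpa [h₁x, h₂x] using
        hκ.ne_of_adj x₁ (h₁.resolve_left h₁x) x₂ (h₂.resolve_left h₂x) y h₁y h₂y hne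

theorem exists_isPartialIntervalColoring [DecidableEq V] {a b : ℕ} {s : Set V} (hs : s.Finite)
    (ha : ∀ x ∈ s, G.degree x = a) (hb : ∀ x ∈ s, ∀ y ∈ G.neighborSet x, G.degree y ≤ b) :
    ∃ κ, G.IsPartialIntervalColoring κ a (a * b) s := by
  induction s, hs using Set.Finite.induction_on with
  | empty => exact ⟨0, by simp, by simp⟩
  | @insert x s hxs _ ih =>
    obtain ⟨κ, hκ⟩ := ih (fun x hx => ha x (.inr hx)) (fun x hx => hb x (.inr hx))
    exact hκ.exists_insert hxs (ha x (.inl rfl)) (hb x (.inl rfl))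

end SimpleGraph

/-- If `G = (X, Y; E)` is an `(a,b)`-biregular bipartite graph (every vertex of `X` has
degree `a`, every vertex of `Y = Xᶜ` has degree `b`), then `G` has an `X`-interval edge
coloring using at most `a * b` colors; in particular `χ'_int(G, X) ≤ a * b`. -/
theorem biregular_X_interval_coloring {V : Type*} [Fintype V] [DecidableEq V]
    (G : SimpleGraph V) [DecidableRel G.Adj] (X : Set V) (a b : ℕ)
    (hbip : IsBipartition G X)
    (ha : ∀ x ∈ X, G.degree x = a)
    (hb : ∀ y ∉ X, G.degree y = b) :
    ∃ c : G.edgeSet → ℕ, IsProperEdgeColoring G c ∧ (∀ e, c e < a * b) ∧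
      ∀ x ∈ X, IntervalAt G c x := by
  obtain ⟨κ, hκ⟩ := SimpleGraph.exists_isPartialIntervalColoring (Set.toFinite X) ha
    fun x hx y hxy => (hb y ((hbip x y hxy).1 hx)).le
  exact hκ.exists_intervalColoring hbip
end

section
/- Let G = (X,Y;E) be a bipartite graph, let d ≥ 1, and suppose that every vertex of X has degree exactly d and every vertex of Y has degree at most b. Then G has an X-interval coloring using at most d·b colors. -/
/-!
Color the vertices of `X` one at a time. Number the `d` edges at `x` by `0, …, d - 1` and pick a
parameter `t < b * d`; the `j`-th edge gets `blockColor d t j`, so the palette of `x` is the whole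
block of `d` consecutive colors starting at `t / d * d`, whatever `t` is. For a fixed `j`, distinct
`t` give distinct colors, so each color already used at the `Y`-end of an edge at `x` rules out at
most one `t`. Those are at most `d * (b - 1) < b * d` colors, so some `t` is still free.
-/

open Finset

def blockColor (d t j : ℕ) : ℕ := t / d * d + (t + j) % d

theorem blockColor_injective (d j : ℕ) : Function.Injective (blockColor d · j) := by
  intro t t' h
  simp only [blockColor] at h
  rcases Nat.eq_zero_or_pos d with rfl | hd
  · simpa using h
  have hquot : ∀ s, (s / d * d + (s + j) % d) / d = s / d := fun s => by
    rw [Nat.add_comm, Nat.add_mul_div_right _ _ hd, Nat.div_eq_of_lt (Nat.mod_lt _ hd), zero_add]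
  have hdiv : t / d = t' / d := by simpa only [hquot] using congrArg (· / d) h
  have hmod : t % d = t' % d := by
    have : (t + j) % d = (t' + j) % d := by rw [hdiv] at h; omega
    exact Nat.ModEq.add_right_cancel' j this
  rw [← Nat.div_add_mod t d, ← Nat.div_add_mod t' d, hdiv, hmod]

theorem blockColor_lt {d b t : ℕ} (j : ℕ) (hd : 0 < d) (ht : t < b * d) :
    blockColor d t j < b * d := by
  have hq : t / d < b := (Nat.div_lt_iff_lt_mul hd).2 ht
  have hr : (t + j) % d < d := Nat.mod_lt _ hd
  calc blockColor d t j < t / d * d + d := by unfold blockColor; omega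
    _ = (t / d + 1) * d := by ring
    _ ≤ b * d := Nat.mul_le_mul_right d hq

theorem blockColor_injOn_range {d : ℕ} (t : ℕ) : Set.InjOn (blockColor d t) (range d) := by
  intro j hj j' hj' h
  have : (t + j) % d = (t + j') % d := by simpa [blockColor] using h
  have := Nat.ModEq.add_left_cancel' t this
  simpa [Nat.ModEq, Nat.mod_eq_of_lt (mem_range.1 hj), Nat.mod_eq_of_lt (mem_range.1 hj')]
    using this

theorem image_blockColor_range {d : ℕ} (t : ℕ) (hd : 0 < d) :
    (range d).image (blockColor d t) = Ico (t / d * d) (t / d * d + d) := by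
  apply eq_of_subset_of_card_le
  · intro m hm
    obtain ⟨j, -, rfl⟩ := mem_image.1 hm
    have := Nat.mod_lt (t + j) hd
    simp only [mem_Ico, blockColor]
    omega
  · rw [Nat.card_Ico, Nat.add_sub_cancel_left, card_image_of_injOn (blockColor_injOn_range t),
      card_range]

theorem exists_blockColor_notMem {ι : Type*} {d b : ℕ} (s : Finset ι) (j : ι → ℕ)
    (F : ι → Finset ℕ) (hF : ∑ i ∈ s, #(F i) < b * d) :
    ∃ t < b * d, ∀ i ∈ s, blockColor d t (j i) ∉ F i := by
  classical
  set bad := s.biUnion fun i => {t ∈ range (b * d) | blockColor d t (j i) ∈ F i}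
  have hbad : #bad < #(range (b * d)) :=
    calc #bad ≤ ∑ i ∈ s, #{t ∈ range (b * d) | blockColor d t (j i) ∈ F i} := card_biUnion_le
      _ ≤ ∑ i ∈ s, #(F i) := sum_le_sum fun i _ =>
          card_le_card_of_injOn (blockColor d · (j i)) (fun t ht => (mem_filter.1 ht).2)
            (blockColor_injective d (j i)).injOn
      _ < #(range (b * d)) := by rwa [card_range]
  obtain ⟨t, ht, htbad⟩ := exists_mem_notMem_of_card_lt_card hbad
  refine ⟨t, mem_range.1 ht, fun i hi hmem => htbad ?_⟩
  exact mem_biUnion.2 ⟨i, hi, mem_filter.2 ⟨ht, hmem⟩⟩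

theorem exists_conflictFree_assignment {α β : Type*} [Nonempty β] (s : Finset α)
    (A : α → Set β) (conflict : α → β → α → β → Prop)
    (hsymm : ∀ x t x' t', conflict x t x' t' → conflict x' t' x t)
    (hfree : ∀ x ∈ s, ∀ τ : α → β, ∃ t ∈ A x, ∀ x' ∈ s, x' ≠ x → ¬ conflict x t x' (τ x')) :
    ∃ τ : α → β, (∀ x ∈ s, τ x ∈ A x) ∧
      ∀ x ∈ s, ∀ x' ∈ s, x ≠ x' → ¬ conflict x (τ x) x' (τ x') := by
  classical
  suffices ∀ u ⊆ s, ∃ τ : α → β, (∀ x ∈ u, τ x ∈ A x) ∧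
      ∀ x ∈ u, ∀ x' ∈ u, x ≠ x' → ¬ conflict x (τ x) x' (τ x') from this s subset_rfl
  intro u
  induction u using Finset.induction_on with
  | empty => exact fun _ => ⟨fun _ => Classical.arbitrary β, by simp, by simp⟩
  | @insert x u hxu ih =>
    intro hsub
    obtain ⟨τ, hτA, hτ⟩ := ih ((subset_insert x u).trans hsub)
    obtain ⟨t, htA, ht⟩ := hfree x (hsub (mem_insert_self x u)) τ
    have hfresh : ∀ y ∈ u, x ≠ y → ¬ conflict x t y (τ y) :=
      fun y hy hxy => ht y (hsub (mem_insert_of_mem hy)) (Ne.symm hxy)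
    have hupd : ∀ y ∈ u, Function.update τ x t y = τ y :=
      fun y hy => Function.update_of_ne (ne_of_mem_of_not_mem hy hxu) _ _
    refine ⟨Function.update τ x t, ?_, ?_⟩
    · intro y hy
      rcases mem_insert.1 hy with rfl | hy
      · rwa [Function.update_self]
      · rw [hupd y hy]; exact hτA y hy
    · intro y hy y' hy' hyy'
      rcases mem_insert.1 hy with rfl | hyu <;> rcases mem_insert.1 hy' with rfl | hyu'
      · exact absurd rfl hyy'
      · rw [Function.update_self, hupd y' hyu']
        exact hfresh y' hyu' hyy'
      · rw [Function.update_self, hupd y hyu]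
        exact fun h => hfresh y hyu hyy'.symm (hsymm _ _ _ _ h)
      · rw [hupd y hyu, hupd y' hyu']
        exact hτ y hyu y' hyu' hyy'

theorem exists_sym2_lift_eq {α β : Type*} [Inhabited β] (X : Set α) (κ : α → α → β) :
    ∃ c : Sym2 α → β, ∀ x ∈ X, ∀ y ∉ X, c s(x, y) = κ x y := by
  classical
  refine ⟨Sym2.lift ⟨fun v w => if v ∈ X ∧ w ∉ X then κ v w
      else if w ∈ X ∧ v ∉ X then κ w v else default, fun v w => ?_⟩, fun x hx y hy => ?_⟩
  · by_cases hv : v ∈ X <;> by_cases hw : w ∈ X <;> simp [hv, hw]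
  · simp [hx, hy]

namespace IsBipartition

variable {V : Type*} {G : SimpleGraph V} {X : Set V}

@[elab_as_elim]
theorem edgeSet_induction (hbip : IsBipartition G X) {P : G.edgeSet → Prop}
    (h : ∀ x ∈ X, ∀ y (hxy : G.Adj x y), P ⟨s(x, y), hxy⟩) (e : G.edgeSet) : P e := by
  obtain ⟨e, he⟩ := e
  induction e using Sym2.ind with
  | _ v w =>
    by_cases hv : v ∈ X
    · exact h v hv w he
    · have hw : w ∈ X := by by_contra hw; exact hv ((hbip v w he).2 hw)
      have hswap : (⟨s(v, w), he⟩ : G.edgeSet) = ⟨s(w, v), he.symm⟩ := Subtype.ext Sym2.eq_swap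
      rw [hswap]
      exact h w hw v he.symm

theorem isProperEdgeColoring (hbip : IsBipartition G X) {c : G.edgeSet → ℕ}
    {κ : V → V → ℕ}
    (hc : ∀ x ∈ X, ∀ y (h : G.Adj x y), c ⟨s(x, y), h⟩ = κ x y)
    (hinj : ∀ x ∈ X, Set.InjOn (κ x) (G.neighborSet x))
    (hsep : ∀ x ∈ X, ∀ x' ∈ X, ∀ y, G.Adj x y → G.Adj x' y → κ x y = κ x' y → x = x') :
    IsProperEdgeColoring G c := by
  intro e f
  refine hbip.edgeSet_induction (fun x hx y hxy => ?_) e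
  refine hbip.edgeSet_induction (fun x' hx' y' hxy' => ?_) f
  rintro hne ⟨v, hv, hv'⟩ heq
  rw [hc x hx y hxy, hc x' hx' y' hxy'] at heq
  have hy : y ∉ X := (hbip x y hxy).1 hx
  have hy' : y' ∉ X := (hbip x' y' hxy').1 hx'
  rw [Sym2.mem_iff] at hv hv'
  rcases hv with rfl | rfl <;> rcases hv' with rfl | rfl
  · obtain rfl := hinj v hx hxy hxy' heq
    exact hne rfl
  · exact hy' hx
  · exact hy hx'
  · obtain rfl := hsep x hx x' hx' v hxy hxy' heq
    exact hne rfl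

theorem palette_eq_image_s3 (hbip : IsBipartition G X) {c : G.edgeSet → ℕ}
    {κ : V → V → ℕ}
    (hc : ∀ x ∈ X, ∀ y (h : G.Adj x y), c ⟨s(x, y), h⟩ = κ x y) {x : V} (hx : x ∈ X) :
    palette G c x = κ x '' G.neighborSet x := by
  ext n
  constructor
  · rintro ⟨e, hxe, rfl⟩
    revert hxe
    refine hbip.edgeSet_induction (fun x' hx' y hxy hxe => ?_) e
    rcases Sym2.mem_iff.1 hxe with rfl | rfl
    · exact ⟨y, hxy, (hc x hx' y hxy).symm⟩
    · exact absurd hx ((hbip x' x hxy).1 hx')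
  · rintro ⟨y, hxy, rfl⟩
    exact ⟨⟨s(x, y), hxy⟩, Sym2.mem_mk_left x y, hc x hx y hxy⟩

end IsBipartition

theorem intervalAt_iff_ordConnected {V : Type*} {G : SimpleGraph V} {c : G.edgeSet → ℕ}
    {v : V} :
    IntervalAt G c v ↔ (palette G c v).OrdConnected :=
  ⟨fun h => ⟨fun _ ha _ hb _ hm => h _ _ _ ha hb hm.1 hm.2⟩,
    fun h _ _ _ ha hb ham hmb => h.out ha hb ⟨ham, hmb⟩⟩

theorem exists_blockColor_ne_at_common_neighbors {V : Type*} {G : SimpleGraph V}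
    [G.LocallyFinite] {X : Set V} {d b : ℕ} (hd : 1 ≤ d) (hbip : IsBipartition G X)
    (hX : ∀ x ∈ X, G.degree x = d) (hY : ∀ y ∉ X, G.degree y ≤ b)
    (σ : V → V → ℕ) (τ : V → ℕ) {x : V} (hx : x ∈ X) :
    ∃ t < b * d, ∀ x' ≠ x, ∀ y, G.Adj x y → G.Adj x' y →
      blockColor d t (σ x y) ≠ blockColor d (τ x') (σ x' y) := by
  classical
  set F : V → Finset ℕ := fun y =>
    ((G.neighborFinset y).erase x).image fun x' => blockColor d (τ x') (σ x' y)
  have hF : ∀ y ∈ G.neighborFinset x, #(F y) ≤ b - 1 := fun y hy =>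
    calc #(F y) ≤ #((G.neighborFinset y).erase x) := card_image_le
      _ = G.degree y - 1 := by
        rw [card_erase_of_mem (by simpa [G.adj_comm] using hy), G.card_neighborFinset_eq_degree]
      _ ≤ b - 1 := Nat.sub_le_sub_right (hY y ((hbip x y (by simpa using hy)).1 hx)) 1
  obtain ⟨y₀, hy₀⟩ : (G.neighborFinset x).Nonempty := by
    rw [← card_pos, G.card_neighborFinset_eq_degree, hX x hx]; exact hd
  have hb : 1 ≤ b := (G.degree_pos_iff_exists_adj y₀).2 ⟨x, by simpa [G.adj_comm] using hy₀⟩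
    |>.trans_le (hY y₀ ((hbip x y₀ (by simpa using hy₀)).1 hx))
  have hsum : ∑ y ∈ G.neighborFinset x, #(F y) < b * d :=
    calc ∑ y ∈ G.neighborFinset x, #(F y) ≤ d * (b - 1) := by
          simpa [G.card_neighborFinset_eq_degree, hX x hx] using sum_le_sum hF
      _ < b * d := by
          rw [Nat.mul_sub_one, mul_comm d b]
          have : d ≤ b * d := Nat.le_mul_of_pos_left d hb
          omega
  obtain ⟨t, ht, hfree⟩ := exists_blockColor_notMem _ (σ x) F hsum
  refine ⟨t, ht, fun x' hx' y hxy hx'y heq => hfree y (by simpa using hxy) ?_⟩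
  exact mem_image.2 ⟨x', mem_erase.2 ⟨hx', by simpa [G.adj_comm] using hx'y⟩, heq.symm⟩

theorem exists_separating_shifts {V : Type*} {G : SimpleGraph V} [G.LocallyFinite] [Finite V]
    {X : Set V} {d b : ℕ} (hd : 1 ≤ d) (hbip : IsBipartition G X)
    (hX : ∀ x ∈ X, G.degree x = d) (hY : ∀ y ∉ X, G.degree y ≤ b) (σ : V → V → ℕ) :
    ∃ τ : V → ℕ, (∀ x ∈ X, τ x < b * d) ∧ ∀ x ∈ X, ∀ x' ∈ X, ∀ y, G.Adj x y → G.Adj x' y →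
      blockColor d (τ x) (σ x y) = blockColor d (τ x') (σ x' y) → x = x' := by
  have hX' := Set.toFinite X
  obtain ⟨τ, hτ, hsep⟩ := exists_conflictFree_assignment hX'.toFinset (fun _ => Set.Iio (b * d))
    (fun x t x' t' => ∃ y, G.Adj x y ∧ G.Adj x' y ∧
      blockColor d t (σ x y) = blockColor d t' (σ x' y))
    (fun _ _ _ _ ⟨y, hxy, hx'y, heq⟩ => ⟨y, hx'y, hxy, heq.symm⟩)
    (fun x hx τ => by
      obtain ⟨t, ht, hfree⟩ :=
        exists_blockColor_ne_at_common_neighbors hd hbip hX hY σ τ (hX'.mem_toFinset.1 hx)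
      exact ⟨t, ht, fun x' _ hx'x ⟨y, hxy, hx'y, heq⟩ => hfree x' hx'x y hxy hx'y heq⟩)
  simp only [Set.Finite.mem_toFinset, Set.mem_Iio] at hτ hsep
  exact ⟨τ, hτ, fun x hx x' hx' y hxy hx'y heq =>
    by_contra fun hne => hsep x hx x' hx' hne ⟨y, hxy, hx'y, heq⟩⟩

theorem SimpleGraph.exists_bijOn_neighborSet_range {V : Type*} (G : SimpleGraph V)
    [G.LocallyFinite] (x : V) :
    ∃ σ : V → ℕ, Set.BijOn σ (G.neighborSet x) (range (G.degree x)) :=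
  (G.neighborSet x).toFinite.exists_bijOn_of_encard_eq (by
    rw [Set.encard_coe_eq_coe_finsetCard, card_range, ← G.card_neighborFinset_eq_degree,
      ← Set.encard_coe_eq_coe_finsetCard, G.coe_neighborFinset])

theorem X_interval_coloring_of_X_regular_general {V : Type*} [Fintype V]
    (G : SimpleGraph V) [DecidableRel G.Adj] (X : Set V) (d b : ℕ)
    (hd : 1 ≤ d)
    (hbip : IsBipartition G X)
    (hX : ∀ x ∈ X, G.degree x = d)
    (hY : ∀ y ∉ X, G.degree y ≤ b) :
    ∃ c : G.edgeSet → ℕ, IsProperEdgeColoring G c ∧ (∀ e, c e < d * b) ∧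
      ∀ x ∈ X, IntervalAt G c x := by
  choose σ hσ using G.exists_bijOn_neighborSet_range
  have hσX : ∀ x ∈ X, Set.BijOn (σ x) (G.neighborSet x) (range d) := fun x hx => hX x hx ▸ hσ x
  obtain ⟨τ, hτ, hsep⟩ := exists_separating_shifts hd hbip hX hY σ
  set κ : V → V → ℕ := fun x y => blockColor d (τ x) (σ x y)
  obtain ⟨c, hc⟩ := exists_sym2_lift_eq X κ
  have hcκ : ∀ x ∈ X, ∀ y (h : G.Adj x y), c s(x, y) = κ x y :=
    fun x hx y h => hc x hx y ((hbip x y h).1 hx)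
  refine ⟨fun e => c e, hbip.isProperEdgeColoring hcκ (fun x hx => ?_) hsep, ?_, fun x hx => ?_⟩
  · exact (blockColor_injOn_range (τ x)).comp (hσX x hx).injOn (hσX x hx).mapsTo
  · refine hbip.edgeSet_induction fun x hx y h => ?_
    rw [mul_comm]
    exact (hcκ x hx y h).trans_lt (blockColor_lt _ hd (hτ x hx))
  · have hpal : palette G (fun e => c e) x = Set.Ico (τ x / d * d) (τ x / d * d + d) := by
      rw [hbip.palette_eq_image_s3 hcκ hx, show κ x = blockColor d (τ x) ∘ σ x from rfl,
        Set.image_comp, (hσX x hx).image_eq, ← coe_image, image_blockColor_range _ hd, coe_Ico]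
    rw [intervalAt_iff_ordConnected, hpal]
    exact Set.ordConnected_Ico

/-- If `G = (X, Y; E)` is a bipartite graph, `d ≥ 1`, every vertex of `X` has degree
exactly `d` and every vertex of `Y = Xᶜ` has degree at most `b`, then `G` has an
`X`-interval coloring using at most `d * b` colors. -/
theorem X_interval_coloring_of_X_regular {V : Type*} [Fintype V] [DecidableEq V]
    (G : SimpleGraph V) [DecidableRel G.Adj] (X : Set V) (d b : ℕ)
    (hd : 1 ≤ d)
    (hbip : IsBipartition G X)
    (hX : ∀ x ∈ X, G.degree x = d)
    (hY : ∀ y ∉ X, G.degree y ≤ b) :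
    ∃ c : G.edgeSet → ℕ, IsProperEdgeColoring G c ∧ (∀ e, c e < d * b) ∧
      ∀ x ∈ X, IntervalAt G c x :=
  X_interval_coloring_of_X_regular_general G X d b hd hbip hX hY
end

section
/- If G = (X,Y;E) is a bipartite graph with Δ(G) = 6 in which the degree of every vertex of X belongs to the set {1, 2, 4, 5, 6}, then χ'_int(G,X) ≤ 10; that is, G has an X-interval coloring using at most 10 colors. -/
/-!
Encode `G` as a bipartite multigraph: a finite type of edges `E` with endpoint maps `xe` (into
`X`) and `ye`; a colouring `κ` is proper exactly when `e ↦ (xe e, κ e)` and `e ↦ (ye e, κ e)` are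
injective. König's theorem, together with vertex splitting, gives an orientation in which every
vertex of degree `d` has in- and out-degree at most `⌈d/2⌉`. Joining the tail copy to the head copy
of each vertex `v` by `3 - max(out v, in v)` extra edges gives an auxiliary bipartite multigraph of
maximum degree `3`; its König `3`-colouring splits `E` into three blocks such that every vertex
meets every block at most twice, and a vertex of even degree meets every block `0` or `2` times.
A `2`-colouring inside each block then gives a proper colouring by `Fin 6` with blocks
`{2t, 2t + 1}`. At a vertex of `X` with degree in `{1, 2, 4, 5, 6}` these block conditions force its
colours to form a cyclic interval of `ℤ/6` (checked by enumeration), and unrolling that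
interval from its first colour places it inside `[0, 10)`.
-/

open Finset Function

section FiberCard

variable {E F V : Type*} [Fintype E] [Fintype F] [DecidableEq V]

def fiberCard (f : E → V) (v : V) : ℕ := #{e | f e = v}

theorem fiberCard_eq_zero {f : E → V} {v : V} : fiberCard f v = 0 ↔ ∀ e, f e ≠ v := by
  simp [fiberCard, filter_eq_empty_iff]

theorem sum_fiberCard [Fintype V] (f : E → V) : ∑ v, fiberCard f v = Fintype.card E :=
  (card_eq_sum_card_fiberwise fun e _ => mem_univ (f e)).symm

theorem card_filter_mem_of_fiberCard_eq {k : ℕ} {f : E → V} (hf : ∀ v, fiberCard f v = k)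
    (s : Finset V) : #{e | f e ∈ s} = #s * k := by
  rw [card_eq_sum_card_fiberwise (t := s) (f := f) fun e he => by simpa using he,
    ← smul_eq_mul, ← sum_const]
  refine sum_congr rfl fun v hv => ?_
  rw [filter_filter, ← hf v, fiberCard]
  congr 1
  ext e
  simp only [mem_filter, mem_univ, true_and, and_iff_right_iff_imp]
  rintro rfl
  exact hv

theorem fiberCard_sumElim (f : E → V) (g : F → V) (v : V) :
    fiberCard (Sum.elim f g) v = fiberCard f v + fiberCard g v := by
  simp only [fiberCard, ← card_disjSum]
  congr 1
  ext (e | e) <;> simp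

theorem fiberCard_comp_equiv (f : E → V) (σ : F ≃ E) (v : V) :
    fiberCard (f ∘ σ) v = fiberCard f v :=
  card_equiv σ fun _ => by simp

theorem fiberCard_sigmaFst [Fintype V] (n : V → ℕ) (v : V) :
    fiberCard (Sigma.fst : (Σ w, Fin (n w)) → V) v = n v := by
  refine (card_bij (fun i _ => (⟨v, i⟩ : Σ w, Fin (n w))) (by simp)
    (fun _ _ _ _ h => eq_of_heq (Sigma.mk.inj h).2) ?_).symm.trans (card_fin _)
  rintro ⟨w, i⟩ h
  obtain rfl : w = v := by simpa using h
  exact ⟨i, mem_univ _, rfl⟩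

theorem fiberCard_subtype (f : E → V) (q : E → Prop) [DecidablePred q] (v : V) :
    fiberCard (fun e : {e // q e} => f e) v = #{e | q e ∧ f e = v} := by
  refine card_bij (fun e _ => e.1) (by simp +contextual) (fun _ _ _ _ => Subtype.ext) fun e he => ?_
  simp only [mem_filter, mem_univ, true_and] at he
  exact ⟨⟨e, he.1⟩, by simpa using he.2, rfl⟩

theorem fiberCard_add_fiberCard_of_swap {a b f g : E → V}
    (h : ∀ e, f e = a e ∧ g e = b e ∨ f e = b e ∧ g e = a e) (v : V) :
    fiberCard f v + fiberCard g v = fiberCard a v + fiberCard b v := by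
  simp only [fiberCard, card_filter, ← sum_add_distrib]
  refine sum_congr rfl fun e _ => ?_
  rcases h e with ⟨hf, hg⟩ | ⟨hf, hg⟩ <;> rw [hf, hg]
  exact add_comm _ _

theorem fiberCard_eq_zero_or_fiberCard_eq_zero {xe ye : E → V} (hsep : ∀ e e', xe e ≠ ye e')
    (v : V) : fiberCard xe v = 0 ∨ fiberCard ye v = 0 := by
  by_contra! h
  simp only [ne_eq, fiberCard_eq_zero, not_forall, not_not] at h
  obtain ⟨⟨e, he⟩, ⟨e', he'⟩⟩ := h
  exact hsep e e' (he.trans he'.symm)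

variable {C : Type*} [DecidableEq C]

theorem fiberCard_pair_le (f : E → V) (κ : E → C) (v : V) (i : C) :
    fiberCard (fun e => (f e, κ e)) (v, i) ≤ fiberCard f v :=
  card_le_card fun e he => by simp only [mem_filter, Prod.mk.injEq] at he ⊢; exact ⟨he.1, he.2.1⟩

theorem fiberCard_pair_le_one {f : E → V} {κ : E → C} (hκ : Injective fun e => (f e, κ e))
    (v : V) (i : C) : fiberCard (fun e => (f e, κ e)) (v, i) ≤ 1 :=
  card_le_one.mpr fun _ ha _ hb => hκ ((mem_filter.mp ha).2.trans (mem_filter.mp hb).2.symm)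

theorem fiberCard_pair_eq_one {k : ℕ} {f : E → V} {κ : E → Fin k}
    (hκ : Injective fun e => (f e, κ e)) {v : V} (hv : fiberCard f v = k) (i : Fin k) :
    fiberCard (fun e => (f e, κ e)) (v, i) = 1 := by
  refine le_antisymm (fiberCard_pair_le_one hκ v i) (card_pos.mpr ?_)
  have hinj : Set.InjOn κ ({e | f e = v} : Finset E) := fun e he e' he' h => by
    simp only [mem_coe, mem_filter, mem_univ, true_and] at he he'
    exact hκ (Prod.ext (he.trans he'.symm) h)
  have himage : ({e | f e = v} : Finset E).image κ = univ :=
    eq_univ_of_card _ (by rw [card_image_of_injOn hinj, Fintype.card_fin]; exact hv)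
  obtain ⟨e, he, rfl⟩ := mem_image.mp (himage ▸ mem_univ i)
  exact ⟨e, by simpa using he⟩

theorem fiberCard_sumElim_pair (f : E → V) (g : F → V) (κ : E ⊕ F → C) (v : V) (i : C) :
    fiberCard (fun x => (Sum.elim f g x, κ x)) (v, i) =
      fiberCard (fun e => (f e, κ (.inl e))) (v, i) +
        fiberCard (fun x => (g x, κ (.inr x))) (v, i) := by
  rw [← fiberCard_sumElim]
  congr 1
  ext (e | x) <;> rfl

end FiberCard

section Konig

theorem injective_pair_dite {E V : Type*} [DecidableEq E] [DecidableEq V] {k : ℕ} {p : E → V}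
    {M : Finset E} (hM : ∀ v, #{e ∈ M | p e = v} = 1) {κ : {e // e ∉ M} → Fin k}
    (hκ : Injective fun e : {e // e ∉ M} => (p e, κ e)) :
    Injective fun e => (p e, if h : e ∈ M then Fin.last k else (κ ⟨e, h⟩).castSucc) := by
  intro e f hef
  simp only [Prod.mk.injEq] at hef
  obtain ⟨hp, hc⟩ := hef
  by_cases he : e ∈ M <;> by_cases hf : f ∈ M <;> simp only [he, hf, dite_true, dite_false] at hc
  · exact card_le_one.mp (hM (p f)).le e (by simp [he, hp]) f (by simp [hf])
  · exact absurd hc (Fin.castSucc_lt_last _).ne'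
  · exact absurd hc (Fin.castSucc_lt_last _).ne
  · exact congrArg Subtype.val (hκ (Prod.ext hp (Fin.castSucc_injective _ hc)))

variable {V E : Type*} [Fintype V] [DecidableEq V] [Fintype E]

theorem exists_perfectMatching_of_regular {k : ℕ} (hk : 0 < k) {p m : E → V}
    (hp : ∀ v, fiberCard p v = k) (hm : ∀ v, fiberCard m v = k) :
    ∃ M : Finset E, ∀ v, #{e ∈ M | p e = v} = 1 ∧ #{e ∈ M | m e = v} = 1 := by
  classical
  have hall : ∀ A : Finset V, #A ≤ #{w | ∃ v ∈ A, ∃ e, p e = v ∧ m e = w} := by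
    intro A
    refine Nat.le_of_mul_le_mul_right ?_ hk
    rw [← card_filter_mem_of_fiberCard_eq hp, ← card_filter_mem_of_fiberCard_eq hm]
    refine card_le_card fun e he => ?_
    simp only [mem_filter, mem_univ, true_and] at he ⊢
    exact ⟨p e, he, e, rfl, rfl⟩
  obtain ⟨f, hf, hsel⟩ := (Fintype.all_card_le_filter_rel_iff_exists_injective _).mp hall
  choose sel hselp hselm using hsel
  choose g hg using (Finite.injective_iff_bijective.mp hf).2
  refine ⟨univ.image sel, fun v => ⟨card_eq_one.mpr ⟨sel v, ?_⟩, card_eq_one.mpr ⟨sel (g v), ?_⟩⟩⟩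
  · ext e
    simp only [mem_filter, mem_image, mem_univ, true_and, mem_singleton]
    constructor
    · rintro ⟨⟨w, rfl⟩, rfl⟩
      rw [hselp]
    · rintro rfl
      exact ⟨⟨v, rfl⟩, hselp v⟩
  · ext e
    simp only [mem_filter, mem_image, mem_univ, true_and, mem_singleton]
    constructor
    · rintro ⟨⟨w, rfl⟩, h⟩
      rw [hselm, ← hg v] at h
      rw [hf h]
    · rintro rfl
      exact ⟨⟨_, rfl⟩, by rw [hselm, hg]⟩

theorem exists_edgeColoring_of_regular (k : ℕ) {p m : E → V}
    (hp : ∀ v, fiberCard p v = k) (hm : ∀ v, fiberCard m v = k) :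
    ∃ κ : E → Fin k, Injective (fun e => (p e, κ e)) ∧ Injective (fun e => (m e, κ e)) := by
  induction k generalizing E with
  | zero =>
    have : IsEmpty E := Fintype.card_eq_zero_iff.mp <| by simp [← sum_fiberCard p, hp]
    exact ⟨isEmptyElim, fun e => isEmptyElim e, fun e => isEmptyElim e⟩
  | succ k ih =>
    classical
    obtain ⟨M, hM⟩ := exists_perfectMatching_of_regular k.succ_pos hp hm
    have hrest : ∀ f : E → V, (∀ v, fiberCard f v = k + 1) → (∀ v, #{e ∈ M | f e = v} = 1) →
        ∀ v, fiberCard (fun e : {e // e ∉ M} => f e) v = k := by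
      intro f hf hfM v
      have hsplit := card_filter_add_card_filter_not (s := {e | f e = v}) (· ∈ M)
      rw [filter_filter, filter_filter, ← fiberCard, hf] at hsplit
      have hin : #{e | f e = v ∧ e ∈ M} = 1 := by
        rw [← hfM v]
        congr 1
        ext
        simp [and_comm]
      rw [fiberCard_subtype]
      simp only [and_comm (a := _ ∉ M)]
      omega
    obtain ⟨κ, hκp, hκm⟩ := ih (hrest p hp fun v => (hM v).1) (hrest m hm fun v => (hM v).2)
    exact ⟨_, injective_pair_dite (fun v => (hM v).1) hκp,
      injective_pair_dite (fun v => (hM v).2) hκm⟩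

theorem exists_edgeColoring_of_fintype (k : ℕ) {p m : E → V}
    (hp : ∀ v, fiberCard p v ≤ k) (hm : ∀ v, fiberCard m v ≤ k) :
    ∃ κ : E → Fin k, Injective (fun e => (p e, κ e)) ∧ Injective (fun e => (m e, κ e)) := by
  have hpad : ∀ f : E → V, (∀ v, fiberCard f v ≤ k) →
      Fintype.card (Σ v, Fin (k - fiberCard f v)) + Fintype.card E = Fintype.card V * k := by
    intro f hf
    rw [Fintype.card_sigma, ← sum_fiberCard f, ← sum_add_distrib]
    simp [Nat.sub_add_cancel (hf _), mul_comm]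
  -- pad both sides to a `k`-regular multigraph with `k - deg` dummy edge-ends at every vertex
  let σ := Fintype.equivOfCardEq (by have := hpad p hp; have := hpad m hm; omega :
    Fintype.card (Σ v, Fin (k - fiberCard p v)) = Fintype.card (Σ v, Fin (k - fiberCard m v)))
  obtain ⟨κ, hκp, hκm⟩ := exists_edgeColoring_of_regular k
    (p := Sum.elim p Sigma.fst) (m := Sum.elim m (Sigma.fst ∘ σ))
    (fun v => by rw [fiberCard_sumElim, fiberCard_sigmaFst, Nat.add_sub_cancel' (hp v)])
    (fun v => by
      rw [fiberCard_sumElim, fiberCard_comp_equiv, fiberCard_sigmaFst, Nat.add_sub_cancel' (hm v)])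
  exact ⟨κ ∘ Sum.inl, hκp.comp Sum.inl_injective, hκm.comp Sum.inl_injective⟩

end Konig

/-- König's edge colouring theorem for the bipartite multigraph with edges `E`, left endpoints `p`
and right endpoints `m`. -/
theorem exists_edgeColoring {V E : Type*} [DecidableEq V] [Fintype E] (k : ℕ) {p m : E → V}
    (hp : ∀ v, fiberCard p v ≤ k) (hm : ∀ v, fiberCard m v ≤ k) :
    ∃ κ : E → Fin k, Injective (fun e => (p e, κ e)) ∧ Injective (fun e => (m e, κ e)) := by
  let S : Finset V := univ.image p ∪ univ.image m
  have hrestrict : ∀ (f : E → V) (hf : ∀ e, f e ∈ S) (v : S),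
      fiberCard (fun e => (⟨f e, hf e⟩ : S)) v = fiberCard f v := fun f hf v => by
    simp only [fiberCard, Subtype.ext_iff]
  have hpS : ∀ e, p e ∈ S := by simp [S]
  have hmS : ∀ e, m e ∈ S := by simp [S]
  obtain ⟨κ, hκp, hκm⟩ := exists_edgeColoring_of_fintype k
    (fun v => (hrestrict p hpS v).trans_le (hp v)) (fun v => (hrestrict m hmS v).trans_le (hm v))
  refine ⟨κ, fun e f h => hκp ?_, fun e f h => hκm ?_⟩ <;> simpa [Subtype.ext_iff] using h

section Equitable

variable {E V : Type*} [Fintype E] [DecidableEq V]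

theorem exists_fiberIndex (f : E → V) :
    ∃ idx : E → ℕ, (∀ e, idx e < fiberCard f (f e)) ∧ Injective (fun e => (f e, idx e)) := by
  classical
  have hfiber : ∀ v, ∃ g : E → ℕ, ∀ e, f e = v →
      g e < fiberCard f v ∧ ∀ e', f e' = v → g e = g e' → e = e' := by
    intro v
    let s : Finset E := {e | f e = v}
    refine ⟨fun e => if h : e ∈ s then s.equivFin ⟨e, h⟩ else 0,
      fun e he => ⟨?_, fun e' he' h => ?_⟩⟩
    · have he : e ∈ s := by simpa [s] using he
      simp only [he, dite_true]
      exact (s.equivFin ⟨e, he⟩).2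
    · have he : e ∈ s := by simpa [s] using he
      have he' : e' ∈ s := by simpa [s] using he'
      simp only [he, he', dite_true] at h
      exact congrArg Subtype.val (s.equivFin.injective (Fin.ext h))
  choose g hg using hfiber
  refine ⟨fun e => g (f e) e, fun e => (hg _ e rfl).1, fun e e' h => ?_⟩
  simp only [Prod.mk.injEq] at h
  exact (hg _ e rfl).2 e' h.1.symm (h.1 ▸ h.2)

theorem fiberCard_div_le {f : E → V} {idx : E → ℕ} (hidx : Injective fun e => (f e, idx e))
    {k : ℕ} (hk : 0 < k) (v : V) (j : ℕ) : fiberCard (fun e => (f e, idx e / k)) (v, j) ≤ k :=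
  calc _ ≤ #(Ico (j * k) (j * k + k)) := by
        refine card_le_card_of_injOn idx (fun e he => ?_) fun e he e' he' h => ?_
        · simp only [mem_coe, mem_filter, mem_univ, true_and, Prod.mk.injEq] at he
          simp only [coe_Ico, Set.mem_Ico, ← he.2]
          exact ⟨Nat.div_mul_le_self _ _, Nat.lt_div_mul_add hk⟩
        · simp only [mem_coe, mem_filter, mem_univ, true_and, Prod.mk.injEq] at he he'
          exact hidx (Prod.ext (he.1.trans he'.1.symm) h)
    _ = k := by simp

theorem fiberCard_pair_le_ceilDiv {C : Type*} [DecidableEq C] {f : E → V} {idx : E → ℕ}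
    (hidx : ∀ e, idx e < fiberCard f (f e)) {k : ℕ} (hk : 0 < k) {κ : E → C}
    (hκ : Injective fun e => ((f e, idx e / k), κ e)) (v : V) (i : C) :
    fiberCard (fun e => (f e, κ e)) (v, i) ≤ (fiberCard f v + k - 1) / k :=
  calc _ ≤ #(range ((fiberCard f v + k - 1) / k)) := by
        refine card_le_card_of_injOn (fun e => idx e / k) (fun e he => ?_) fun e he e' he' h => ?_
        · simp only [mem_coe, mem_filter, mem_univ, true_and, Prod.mk.injEq] at he
          have hidx_lt := he.1 ▸ hidx e
          have := Nat.lt_div_mul_add (a := fiberCard f v + k - 1) hk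
          simp only [coe_range, Set.mem_Iio, Nat.div_lt_iff_lt_mul hk]
          omega
        · simp only [mem_coe, mem_filter, mem_univ, true_and, Prod.mk.injEq] at he he'
          exact hκ (Prod.ext (Prod.ext (he.1.trans he'.1.symm) h) (he.2.trans he'.2.symm))
    _ = _ := card_range _

/-- Split each vertex into copies of degree at most `k` and colour the split multigraph by
König's theorem. -/
theorem exists_equitable_edgeColoring {k : ℕ} (hk : 0 < k) (p m : E → V) :
    ∃ κ : E → Fin k, ∀ v i,
      fiberCard (fun e => (p e, κ e)) (v, i) ≤ (fiberCard p v + k - 1) / k ∧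
      fiberCard (fun e => (m e, κ e)) (v, i) ≤ (fiberCard m v + k - 1) / k := by
  obtain ⟨ip, hip_lt, hip⟩ := exists_fiberIndex p
  obtain ⟨im, him_lt, him⟩ := exists_fiberIndex m
  obtain ⟨κ, hκp, hκm⟩ := exists_edgeColoring k
    (p := fun e => (p e, ip e / k)) (m := fun e => (m e, im e / k))
    (fun x => fiberCard_div_le hip hk x.1 x.2) (fun x => fiberCard_div_le him hk x.1 x.2)
  exact ⟨κ, fun v i =>
    ⟨fiberCard_pair_le_ceilDiv hip_lt hk hκp v i, fiberCard_pair_le_ceilDiv him_lt hk hκm v i⟩⟩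

theorem exists_balanced_orientation {xe ye : E → V} (hsep : ∀ e e', xe e ≠ ye e') :
    ∃ tail head : E → V,
      (∀ e, tail e = xe e ∧ head e = ye e ∨ tail e = ye e ∧ head e = xe e) ∧
      ∀ v, 2 * fiberCard tail v ≤ fiberCard xe v + fiberCard ye v + 1 ∧
        2 * fiberCard head v ≤ fiberCard xe v + fiberCard ye v + 1 := by
  obtain ⟨κ, hκ⟩ := exists_equitable_edgeColoring two_pos xe ye
  have hite : ∀ (a b : E → V) v, fiberCard (fun e => if κ e = 0 then a e else b e) v ≤
      fiberCard (fun e => (a e, κ e)) (v, 0) + fiberCard (fun e => (b e, κ e)) (v, 1) := by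
    intro a b v
    classical
    refine (card_le_card fun e he => ?_).trans (card_union_le _ _)
    simp only [mem_filter, mem_univ, true_and, mem_union, Prod.mk.injEq] at he ⊢
    split_ifs at he with h
    · exact Or.inl ⟨he, h⟩
    · exact Or.inr ⟨he, by omega⟩
  refine ⟨fun e => if κ e = 0 then xe e else ye e, fun e => if κ e = 0 then ye e else xe e,
    fun e => by dsimp only; split_ifs <;> simp, fun v => ?_⟩
  have := hite xe ye v
  have := hite ye xe v
  have := fiberCard_pair_le xe κ v 0
  have := fiberCard_pair_le xe κ v 1
  have := fiberCard_pair_le ye κ v 0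
  have := fiberCard_pair_le ye κ v 1
  have := hκ v 0
  have := hκ v 1
  rcases fiberCard_eq_zero_or_fiberCard_eq_zero hsep v with h | h <;> simp only [h] at * <;> omega

end Equitable

section Multigraph

variable {E V : Type*} [Fintype E] [DecidableEq V]

theorem exists_blockColoring [Fintype V] {k : ℕ} {xe ye : E → V} (hsep : ∀ e e', xe e ≠ ye e')
    (hdeg : ∀ v, fiberCard xe v + fiberCard ye v ≤ 2 * k) :
    ∃ β : E → Fin k, ∀ v i,
      fiberCard (fun e => (xe e, β e)) (v, i) + fiberCard (fun e => (ye e, β e)) (v, i) ≤ 2 ∧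
      (Even (fiberCard xe v + fiberCard ye v) →
        fiberCard (fun e => (xe e, β e)) (v, i) + fiberCard (fun e => (ye e, β e)) (v, i) ≠ 1) := by
  obtain ⟨tail, head, hswap, hbal⟩ := exists_balanced_orientation hsep
  have htot := fiberCard_add_fiberCard_of_swap hswap
  -- At a balanced vertex the gadget edges fill both copies of `v` up to degree `k`, so each copy
  -- sees every colour once and the gadget colours are exactly the ones missing from `v`.
  let gadgets : V → ℕ := fun v => k - max (fiberCard tail v) (fiberCard head v)
  have hgadgets : ∀ v, gadgets v = k - max (fiberCard tail v) (fiberCard head v) := fun _ => rfl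
  have hdegH : ∀ v, fiberCard tail v + gadgets v ≤ k ∧ fiberCard head v + gadgets v ≤ k := by
    intro v
    have := hbal v
    have := hdeg v
    have := htot v
    have := hgadgets v
    omega
  obtain ⟨κ, hκt, hκh⟩ := exists_edgeColoring k
    (p := Sum.elim tail (Sigma.fst : (Σ v, Fin (gadgets v)) → V)) (m := Sum.elim head Sigma.fst)
    (fun v => by rw [fiberCard_sumElim, fiberCard_sigmaFst]; exact (hdegH v).1)
    (fun v => by rw [fiberCard_sumElim, fiberCard_sigmaFst]; exact (hdegH v).2)
  refine ⟨κ ∘ Sum.inl, fun v i => ?_⟩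
  rw [← fiberCard_add_fiberCard_of_swap (f := fun e => (tail e, κ (.inl e)))
    (g := fun e => (head e, κ (.inl e)))
    (fun e => by rcases hswap e with ⟨h1, h2⟩ | ⟨h1, h2⟩ <;> simp [h1, h2])]
  have hts := fiberCard_sumElim_pair tail Sigma.fst κ v i
  have hhs := fiberCard_sumElim_pair head Sigma.fst κ v i
  have := fiberCard_pair_le_one hκt v i
  have := fiberCard_pair_le_one hκh v i
  refine ⟨by omega, fun heven => ?_⟩
  have hfull : fiberCard tail v + gadgets v = k ∧ fiberCard head v + gadgets v = k := by
    obtain ⟨j, hj⟩ := heven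
    have := hbal v
    have := hdeg v
    have := htot v
    have := hgadgets v
    omega
  have := fiberCard_pair_eq_one hκt (by rw [fiberCard_sumElim, fiberCard_sigmaFst]; exact hfull.1) i
  have := fiberCard_pair_eq_one hκh (by rw [fiberCard_sumElim, fiberCard_sigmaFst]; exact hfull.2) i
  omega

def fiberPalette {C : Type*} [DecidableEq C] (f : E → V) (c : E → C) (v : V) : Finset C :=
  ({e | f e = v} : Finset E).image c

theorem card_fiberPalette {C : Type*} [DecidableEq C] {f : E → V} {c : E → C}
    (hc : Injective fun e => (f e, c e)) (v : V) : #(fiberPalette f c v) = fiberCard f v :=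
  card_image_of_injOn fun e he e' he' h => by
    simp only [mem_coe, mem_filter, mem_univ, true_and] at he he'
    exact hc (Prod.ext (he.trans he'.symm) h)

theorem exists_properColoring_fin_six [Fintype V] {xe ye : E → V} (hsep : ∀ e e', xe e ≠ ye e')
    (hdeg : ∀ v, fiberCard xe v + fiberCard ye v ≤ 6) :
    ∃ c : E → Fin 6, Injective (fun e => (xe e, c e)) ∧ Injective (fun e => (ye e, c e)) ∧
      ∀ v, Even (fiberCard xe v) → ∀ t : Fin 3,
        #{i ∈ fiberPalette xe c v | i.val / 2 = t.val} ≠ 1 := by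
  obtain ⟨β, hβ⟩ := exists_blockColoring (k := 3) hsep hdeg
  obtain ⟨j, hjx, hjy⟩ := exists_edgeColoring 2
    (p := fun e => (xe e, β e)) (m := fun e => (ye e, β e))
    (fun ⟨v, t⟩ => by have := (hβ v t).1; omega) (fun ⟨v, t⟩ => by have := (hβ v t).1; omega)
  let c : E → Fin 6 := fun e => finProdFinEquiv (β e, j e)
  have hc : ∀ f : E → V, Injective (fun e => ((f e, β e), j e)) →
      Injective (fun e => (f e, c e)) := fun f hf e e' h => hf <| by
    simp only [Prod.mk.injEq, c, EmbeddingLike.apply_eq_iff_eq] at h ⊢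
    exact ⟨⟨h.1, h.2.1⟩, h.2.2⟩
  have hblock : ∀ e, (c e).val / 2 = (β e).val := fun e => by
    simp only [c, finProdFinEquiv_apply_val]
    omega
  refine ⟨c, hc xe hjx, hc ye hjy, fun v heven t => ?_⟩
  have hpal : {i ∈ fiberPalette xe c v | i.val / 2 = t.val} =
      fiberPalette (fun e => (xe e, β e)) c (v, t) := by
    ext i
    simp only [fiberPalette, mem_filter, mem_image, mem_univ, true_and, Prod.mk.injEq]
    constructor
    · rintro ⟨⟨e, he, rfl⟩, ht⟩
      exact ⟨e, ⟨he, Fin.ext ((hblock e).symm.trans ht)⟩, rfl⟩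
    · rintro ⟨e, ⟨he, rfl⟩, rfl⟩
      exact ⟨⟨e, he, rfl⟩, hblock e⟩
  have hinj : Injective fun e => ((xe e, β e), c e) := fun e e' h => by
    simp only [Prod.mk.injEq] at h
    exact hc xe hjx (Prod.ext h.1.1 h.2)
  rw [hpal, card_fiberPalette hinj]
  rcases fiberCard_eq_zero_or_fiberCard_eq_zero hsep v with h | h
  · have := fiberCard_pair_le xe β v t
    omega
  · have := fiberCard_pair_le ye β v t
    have := (hβ v t).2 (by rwa [h, add_zero])
    omega

-- `P` is the cyclic interval of `ℤ/6` of length `#P` starting at `s`.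
theorem exists_cyclicInterval_of_blocks (P : Finset (Fin 6)) (h3 : #P ≠ 3)
    (hblocks : Even #P → ∀ t : Fin 3, #{i ∈ P | i.val / 2 = t.val} ≠ 1) :
    ∃ s < 6, s + #P ≤ 10 ∧ ∀ i : Fin 6, i ∈ P ↔ (i.val + 6 - s) % 6 < #P := by
  revert P
  decide

theorem exists_xInterval_coloring_lt_ten [Fintype V] {xe ye : E → V}
    (hsep : ∀ e e', xe e ≠ ye e') (hdeg : ∀ v, fiberCard xe v + fiberCard ye v ≤ 6)
    (h3 : ∀ v, fiberCard xe v ≠ 3) :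
    ∃ c : E → ℕ, Injective (fun e => (xe e, c e)) ∧ Injective (fun e => (ye e, c e)) ∧
      (∀ e, c e < 10) ∧
      ∀ v, ∃ s, ∀ n, (∃ e, xe e = v ∧ c e = n) ↔ s ≤ n ∧ n < s + fiberCard xe v := by
  obtain ⟨c₆, hx, hy, hblocks⟩ := exists_properColoring_fin_six hsep hdeg
  have hrot : ∀ v, ∃ s < 6, s + fiberCard xe v ≤ 10 ∧
      ∀ i : Fin 6, i ∈ fiberPalette xe c₆ v ↔ (i.val + 6 - s) % 6 < fiberCard xe v := fun v => by
    simpa only [card_fiberPalette hx] using exists_cyclicInterval_of_blocks (fiberPalette xe c₆ v)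
      (by rw [card_fiberPalette hx]; exact h3 v) (by rw [card_fiberPalette hx]; exact hblocks v)
  choose s hs6 hs10 hsP using hrot
  -- the representative of `c₆ e` modulo `6` in `[s (xe e), s (xe e) + 6)`
  let c : E → ℕ := fun e => s (xe e) + ((c₆ e).val + 6 - s (xe e)) % 6
  have hmod : ∀ e, c e % 6 = c₆ e := fun e => by
    have := (c₆ e).isLt
    have := hs6 (xe e)
    simp only [c]
    omega
  have hinj : ∀ f : E → V, Injective (fun e => (f e, c₆ e)) → Injective (fun e => (f e, c e)) :=
    fun f hf e e' h => by
      simp only [Prod.mk.injEq] at h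
      exact hf (Prod.ext h.1 (Fin.ext (by rw [← hmod, ← hmod, h.2])))
  have hlt : ∀ e, c e < s (xe e) + fiberCard xe (xe e) := fun e => by
    have := (hsP _ _).mp (mem_image_of_mem c₆ (by simp : e ∈ ({e' | xe e' = xe e} : Finset E)))
    simp only [c]
    omega
  refine ⟨c, hinj xe hx, hinj ye hy, fun e => (hlt e).trans_le (hs10 _),
    fun v => ⟨s v, fun n => ⟨?_, ?_⟩⟩⟩
  · rintro ⟨e, rfl, rfl⟩
    exact ⟨Nat.le_add_right _ _, hlt e⟩
  · rintro ⟨h1, h2⟩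
    have := hs6 v
    have := hdeg v
    obtain ⟨e, he, hce⟩ := mem_image.mp <|
      (hsP v ⟨n % 6, Nat.mod_lt _ (by norm_num)⟩).mpr (by dsimp only; omega)
    simp only [mem_filter, mem_univ, true_and] at he
    refine ⟨e, he, ?_⟩
    simp only [c, he, hce]
    omega

end Multigraph

section Graph

variable {V : Type*} {G : SimpleGraph V} {X : Set V}

theorem IsBipartition.exists_endpoints (hbip : IsBipartition G X) :
    ∃ xe ye : G.edgeSet → V,
      ∀ e : G.edgeSet, (e : Sym2 V) = s(xe e, ye e) ∧ xe e ∈ X ∧ ye e ∉ X := by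
  have : ∀ e : G.edgeSet, ∃ p : V × V, (e : Sym2 V) = s(p.1, p.2) ∧ p.1 ∈ X ∧ p.2 ∉ X := by
    rintro ⟨e, he⟩
    induction e using Sym2.ind with | h u w => ?_
    have huw := hbip u w he
    by_cases hu : u ∈ X
    · exact ⟨(u, w), rfl, hu, huw.mp hu⟩
    · exact ⟨(w, u), Sym2.eq_swap, by tauto, hu⟩
  choose p hp using this
  exact ⟨fun e => (p e).1, fun e => (p e).2, hp⟩

variable {xe ye : G.edgeSet → V} (hends : ∀ e : G.edgeSet, (e : Sym2 V) = s(xe e, ye e))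
include hends

theorem mem_edge_iff (e : G.edgeSet) (v : V) : v ∈ (e : Sym2 V) ↔ xe e = v ∨ ye e = v := by
  rw [hends e, Sym2.mem_iff, eq_comm, @eq_comm _ v]

theorem fiberCard_add_fiberCard_eq_degree [Fintype V] [DecidableEq V] [DecidableRel G.Adj]
    (hsep : ∀ e e', xe e ≠ ye e') (v : V) : fiberCard xe v + fiberCard ye v = G.degree v :=
  calc fiberCard xe v + fiberCard ye v = #{e : G.edgeSet | v ∈ (e : Sym2 V)} := by
        rw [fiberCard, fiberCard, ← card_union_of_disjoint
          (disjoint_filter.mpr fun e _ h h' => hsep e e (h.trans h'.symm)), ← filter_or]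
        simp only [mem_edge_iff hends]
    _ = G.degree v := by
        rw [← G.card_incidenceSet_eq_degree, ← Fintype.card_subtype]
        exact Fintype.card_congr (Equiv.subtypeSubtypeEquivSubtypeInter (· ∈ G.edgeSet) (v ∈ ·))

theorem isProperEdgeColoring_of_injective (hsep : ∀ e e', xe e ≠ ye e') {c : G.edgeSet → ℕ}
    (hcx : Injective fun e => (xe e, c e)) (hcy : Injective fun e => (ye e, c e)) :
    IsProperEdgeColoring G c := by
  rintro e f hef ⟨v, hve, hvf⟩ hc
  rw [mem_edge_iff hends] at hve hvf
  rcases hve with rfl | rfl <;> rcases hvf with h | h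
  · exact hef (hcx (Prod.ext h.symm hc))
  · exact hsep _ _ h.symm
  · exact hsep _ _ h
  · exact hef (hcy (Prod.ext h.symm hc))

theorem intervalAt_of_forall_iff {c : G.edgeSet → ℕ} {x : V} (hx : ∀ e, ye e ≠ x) {s d : ℕ}
    (hs : ∀ n, (∃ e, xe e = x ∧ c e = n) ↔ s ≤ n ∧ n < s + d) : IntervalAt G c x := by
  have hpal : ∀ n, n ∈ palette G c x ↔ s ≤ n ∧ n < s + d := fun n => by
    rw [← hs]
    simp only [palette, Set.mem_ofPred_eq, mem_edge_iff hends, hx, or_false]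
  intro a b n ha hb han hnb
  rw [hpal] at ha hb ⊢
  omega

end Graph

/-- If `G = (X, Y; E)` is a bipartite graph with `Δ(G) = 6` in which every vertex of `X`
has degree in `{1, 2, 4, 5, 6}`, then `χ'_int(G, X) ≤ 10`: `G` has an `X`-interval
coloring using at most `10` colors. -/
theorem X_interval_coloring_ten_colors {V : Type*} [Fintype V] [DecidableEq V]
    (G : SimpleGraph V) [DecidableRel G.Adj] (X : Set V)
    (hbip : IsBipartition G X)
    (hΔ : G.maxDegree = 6)
    (hX : ∀ x ∈ X, G.degree x ∈ ({1, 2, 4, 5, 6} : Set ℕ)) :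
    ∃ c : G.edgeSet → ℕ, IsProperEdgeColoring G c ∧ (∀ e, c e < 10) ∧
      ∀ x ∈ X, IntervalAt G c x := by
  obtain ⟨xe, ye, hends⟩ := hbip.exists_endpoints
  have hsep : ∀ e e', xe e ≠ ye e' := fun e e' h => (hends e').2.2 (h ▸ (hends e).2.1)
  have hdeg := fiberCard_add_fiberCard_eq_degree (fun e => (hends e).1) hsep
  have hxX : ∀ v, v ∉ X → fiberCard xe v = 0 := fun v hv =>
    fiberCard_eq_zero.mpr fun e he => hv (he ▸ (hends e).2.1)
  have hyX : ∀ v ∈ X, fiberCard ye v = 0 := fun v hv =>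
    fiberCard_eq_zero.mpr fun e he => (hends e).2.2 (he ▸ hv)
  have h3 : ∀ v, fiberCard xe v ≠ 3 := fun v => by
    by_cases hv : v ∈ X
    · have hx := hX v hv
      have hd := hdeg v
      rw [hyX v hv, add_zero] at hd
      simp only [Set.mem_insert_iff, Set.mem_singleton_iff] at hx
      omega
    · simp [hxX v hv]
  obtain ⟨c, hcx, hcy, hc10, hint⟩ := exists_xInterval_coloring_lt_ten hsep
    (fun v => hdeg v ▸ hΔ ▸ G.degree_le_maxDegree v) h3
  refine ⟨c, isProperEdgeColoring_of_injective (fun e => (hends e).1) hsep hcx hcy, hc10,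
    fun x hx => ?_⟩
  obtain ⟨s, hs⟩ := hint x
  exact intervalAt_of_forall_iff (fun e => (hends e).1)
    (fun e h => (hends e).2.2 (h ▸ hx)) hs
end
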